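/- Fix b₀ > 0, m > 0, Ω ≥ 0. Define F(t) = (2b₀m/(2b₀m+Ω))^m · ∑_{z=0}^∞ ((m)_z/(z!·Γ(z+1))) · (Ω/(2b₀m+Ω))^z · γ(z+1, t/(2b₀)) for t ≥ 0, where (m)_z is the Pochhammer symbol and γ is the lower incomplete gamma function. Then F is a cumulative distribution function on [0,∞): F is monotone nondecreasing, F(0) = 0, and lim_{t→∞} F(t) = 1. -/

import Mathlib

/-!
Each `γ(z+1, ·)` is nonnegative, nondecreasing, vanishes at `0` and increases to `Γ(z+1) = z!`,
so `F` is a nonnegative mixture of such functions. With `x = Ω/(2b₀m+Ω)` the limit of the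
mixture, by dominated convergence, is the binomial series `∑ (m)_z x^z / z! = (1 - x)^(-m)`,
and the prefactor is exactly `(1 - x)^m`.
-/

open MeasureTheory Real Set Filter

/-- The lower incomplete gamma function `γ(s,t) = ∫₀^t x^{s-1} e^{-x} dx`. -/
noncomputable def lowerGamma (s t : ℝ) : ℝ := ∫ x in Set.Ioc (0 : ℝ) t, x ^ (s - 1) * Real.exp (-x)

/-- The Pochhammer symbol `(m)_z = m (m+1) ⋯ (m+z-1)`. -/
noncomputable def poch (m : ℝ) (z : ℕ) : ℝ := (ascPochhammer ℝ z).eval m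

section LowerGamma

variable {s : ℝ}

lemma integrableOn_rpow_mul_exp_neg_Ioi (hs : 0 < s) :
    IntegrableOn (fun x : ℝ => x ^ (s - 1) * exp (-x)) (Ioi 0) :=
  (GammaIntegral_convergent hs).congr_fun (fun _ _ => mul_comm _ _) measurableSet_Ioi

lemma integral_rpow_mul_exp_neg_Ioi (hs : 0 < s) :
    ∫ x in Ioi (0 : ℝ), x ^ (s - 1) * exp (-x) = Gamma s := by
  simp_rw [Gamma_eq_integral hs, mul_comm]

@[simp]
lemma lowerGamma_zero_right (s : ℝ) : lowerGamma s 0 = 0 := by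
  simp [lowerGamma]

lemma lowerGamma_nonneg (s t : ℝ) : 0 ≤ lowerGamma s t :=
  setIntegral_nonneg measurableSet_Ioc fun x hx => by have := hx.1; positivity

lemma monotone_lowerGamma (hs : 0 < s) : Monotone (lowerGamma s) := fun _ _ htu =>
  setIntegral_mono_set ((integrableOn_rpow_mul_exp_neg_Ioi hs).mono_set Ioc_subset_Ioi_self)
    ((ae_restrict_mem measurableSet_Ioc).mono fun x hx => by have := hx.1; positivity)
    (Ioc_subset_Ioc_right htu).eventuallyLE

lemma lowerGamma_le_Gamma (hs : 0 < s) (t : ℝ) : lowerGamma s t ≤ Gamma s := by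
  rw [← integral_rpow_mul_exp_neg_Ioi hs]
  exact setIntegral_mono_set (integrableOn_rpow_mul_exp_neg_Ioi hs)
    ((ae_restrict_mem measurableSet_Ioi).mono fun x (hx : 0 < x) => by positivity)
    Ioc_subset_Ioi_self.eventuallyLE

lemma tendsto_lowerGamma_atTop (hs : 0 < s) :
    Tendsto (lowerGamma s) atTop (nhds (Gamma s)) := by
  rw [← integral_rpow_mul_exp_neg_Ioi hs]
  refine (intervalIntegral_tendsto_integral_Ioi 0 (integrableOn_rpow_mul_exp_neg_Ioi hs)
    tendsto_id).congr' ?_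
  filter_upwards [eventually_ge_atTop 0] with t ht
  rw [id, intervalIntegral.integral_of_le ht, lowerGamma]

end LowerGamma

section GammaMixture

variable {a s : ℕ → ℝ}

lemma summable_mul_lowerGamma (ha : ∀ z, 0 ≤ a z) (hs : ∀ z, 0 < s z)
    (hS : Summable fun z => a z * Gamma (s z)) (t : ℝ) :
    Summable fun z => a z * lowerGamma (s z) t :=
  hS.of_nonneg_of_le (fun z => mul_nonneg (ha z) (lowerGamma_nonneg _ _))
    fun z => mul_le_mul_of_nonneg_left (lowerGamma_le_Gamma (hs z) t) (ha z)

lemma monotone_tsum_mul_lowerGamma (ha : ∀ z, 0 ≤ a z) (hs : ∀ z, 0 < s z)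
    (hS : Summable fun z => a z * Gamma (s z)) :
    Monotone fun t => ∑' z, a z * lowerGamma (s z) t := fun _ _ htu =>
  (summable_mul_lowerGamma ha hs hS _).tsum_le_tsum
    (fun z => mul_le_mul_of_nonneg_left (monotone_lowerGamma (hs z) htu) (ha z))
    (summable_mul_lowerGamma ha hs hS _)

lemma tendsto_tsum_mul_lowerGamma_atTop (ha : ∀ z, 0 ≤ a z) (hs : ∀ z, 0 < s z) {S : ℝ}
    (hS : HasSum (fun z => a z * Gamma (s z)) S) :
    Tendsto (fun t => ∑' z, a z * lowerGamma (s z) t) atTop (nhds S) := by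
  rw [← hS.tsum_eq]
  refine tendsto_tsum_of_dominated_convergence hS.summable
    (fun z => (tendsto_lowerGamma_atTop (hs z)).const_mul (a z)) (Eventually.of_forall ?_)
  intro t z
  rw [norm_of_nonneg (mul_nonneg (ha z) (lowerGamma_nonneg _ _))]
  exact mul_le_mul_of_nonneg_left (lowerGamma_le_Gamma (hs z) t) (ha z)

end GammaMixture

lemma poch_pos {m : ℝ} (hm : 0 < m) (n : ℕ) : 0 < poch m n :=
  ascPochhammer_pos n m hm

lemma ringChoose_eq_poch_div_factorial (m : ℝ) (n : ℕ) :
    Ring.choose (m + n - 1) n = poch m n / n.factorial := by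
  rw [← Ring.multichoose_eq, eq_div_iff (by positivity), mul_comm, ← nsmul_eq_mul,
    Ring.factorial_nsmul_multichoose_eq_ascPochhammer, Polynomial.ascPochhammer_smeval_eq_eval,
    poch]

lemma hasSum_poch_div_factorial_mul_pow (m : ℝ) {x : ℝ} (hx : |x| < 1) :
    HasSum (fun n => poch m n / n.factorial * x ^ n) ((1 - x) ^ m)⁻¹ := by
  have hx' : x ∈ Metric.eball (0 : ℝ) 1 := by
    rwa [mem_eball_zero_iff, ← ofReal_norm, ENNReal.ofReal_lt_one, Real.norm_eq_abs]
  simpa [FormalMultilinearSeries.ofScalars_apply_eq, ringChoose_eq_poch_div_factorial, mul_comm]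
    using (one_div_one_sub_rpow_hasFPowerSeriesOnBall_zero m).hasSum hx'

/-- The shadowed-Rician power CDF
`F(t) = (2b₀m/(2b₀m+Ω))^m ∑_z ((m)_z/(z!·Γ(z+1))) (Ω/(2b₀m+Ω))^z γ(z+1, t/(2b₀))`
is a genuine CDF on `[0,∞)`: it is monotone nondecreasing, `F(0) = 0`, and `F(t) → 1` as
`t → ∞`. -/
theorem stmt6 (b0 m Om : ℝ) (hb0 : 0 < b0) (hm : 0 < m) (hOm : 0 ≤ Om) :
    MonotoneOn (fun t : ℝ =>
        (2 * b0 * m / (2 * b0 * m + Om)) ^ m *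
          ∑' z : ℕ, poch m z / (z.factorial * Real.Gamma (z + 1)) *
            (Om / (2 * b0 * m + Om)) ^ z * lowerGamma (z + 1) (t / (2 * b0))) (Ici (0 : ℝ)) ∧
    ((2 * b0 * m / (2 * b0 * m + Om)) ^ m *
        ∑' z : ℕ, poch m z / (z.factorial * Real.Gamma (z + 1)) *
          (Om / (2 * b0 * m + Om)) ^ z * lowerGamma (z + 1) ((0 : ℝ) / (2 * b0))) = 0 ∧
    Tendsto (fun t : ℝ =>
        (2 * b0 * m / (2 * b0 * m + Om)) ^ m *
          ∑' z : ℕ, poch m z / (z.factorial * Real.Gamma (z + 1)) *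
            (Om / (2 * b0 * m + Om)) ^ z * lowerGamma (z + 1) (t / (2 * b0)))
      atTop (nhds 1) := by
  have hpos : 0 < 2 * b0 * m + Om := by positivity
  have hC : 2 * b0 * m / (2 * b0 * m + Om) = 1 - Om / (2 * b0 * m + Om) := by
    rw [eq_sub_iff_add_eq, ← add_div, div_self hpos.ne']
  set x := Om / (2 * b0 * m + Om)
  have hx0 : 0 ≤ x := by positivity
  have hx1 : x < 1 := (div_lt_one hpos).2 (by linarith [mul_pos (mul_pos two_pos hb0) hm])
  rw [hC]
  have ha : ∀ z : ℕ, 0 ≤ poch m z / (z.factorial * Gamma (z + 1)) * x ^ z := fun z => by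
    have := poch_pos hm z
    positivity
  have hs : ∀ z : ℕ, (0 : ℝ) < z + 1 := fun z => z.cast_add_one_pos
  have hS : HasSum (fun z : ℕ => poch m z / (z.factorial * Gamma (z + 1)) * x ^ z * Gamma (z + 1))
      ((1 - x) ^ m)⁻¹ := by
    convert hasSum_poch_div_factorial_mul_pow m (abs_lt.2 ⟨by linarith, hx1⟩) using 2 with z
    rw [Gamma_nat_eq_factorial]
    field_simp
  have hscale : Monotone fun t : ℝ => t / (2 * b0) := fun _ _ h =>
    div_le_div_of_nonneg_right h (by positivity)
  refine ⟨fun t _ u _ htu => ?_, by simp, ?_⟩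
  · exact mul_le_mul_of_nonneg_left
      (monotone_tsum_mul_lowerGamma ha hs hS.summable (hscale htu)) (by positivity)
  · have hlim := ((tendsto_tsum_mul_lowerGamma_atTop ha hs hS).comp
      (tendsto_id.atTop_div_const (by positivity : 0 < 2 * b0))).const_mul ((1 - x) ^ m)
    rwa [mul_inv_cancel₀ (rpow_pos_of_pos (sub_pos.2 hx1) m).ne'] at hlim
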